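/- Let H be a complex Hilbert space, let (φ̃_n)_{n≥0} and (Ψ̃_n)_{n≥0} be sequences in H, and let (α_n)_{n≥0} be a strictly increasing sequence of real numbers with α_0 = 0; set ᾱ = sup_n α_n ∈ (0, ∞], α_0! = 1 and α_k! = α_1·α_2···α_k for k ≥ 1. Suppose there exist strictly positive constants A_φ, A_Ψ, r_φ, r_Ψ and strictly positive sequences (M_n(φ)), (M_n(Ψ)) such that M_n(φ)/M_{n+1}(φ) → M(φ) and M_n(Ψ)/M_{n+1}(Ψ) → M(Ψ) as n → ∞ (with M(φ), M(Ψ) ∈ (0, ∞]), and ‖φ̃_n‖ ≤ A_φ·r_φⁿ·M_n(φ), ‖Ψ̃_n‖ ≤ A_Ψ·r_Ψⁿ·M_n(Ψ) for all n ≥ 0. Then, setting ρ = ᾱ·min(1, M(φ)/r_φ, M(Ψ)/r_Ψ), for every z ∈ ℂ with |z| < ρ: the scalar series Σ_{k≥0} |z|^{2k}/(α_k!)² converges (so N(|z|) = (Σ_{k≥0} |z|^{2k}/(α_k!)²)^{−1/2} is well defined), and the vector series Σ_{k≥0} (z^k/α_k!)·φ̃_k and Σ_{k≥0} (z^k/α_k!)·Ψ̃_k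 converge in the norm of H, so that the bi-coherent states φ(z) = N(|z|)·Σ_{k≥0} (z^k/α_k!)·φ̃_k and Ψ(z) = N(|z|)·Σ_{k≥0} (z^k/α_k!)·Ψ̃_k are well-defined elements of H. -/

import Mathlib

/-!
Each series is compared with `∑ xⁿ bₙ` for a positive sequence `b` whose reciprocal ratios
`bₙ / bₙ₊₁` converge in `[0, ∞]` to a limit `L` exceeding `x`; the ratio test then applies.
For the vector series `x = |z| r`, `bₙ = M_n / α_n!` and `L = ᾱ · M`, because `α_{n+1} ↑ ᾱ`;
for the normalisation series `x = |z|²`, `bₙ = 1 / (α_n!)²` and `L = ᾱ²`. The choice of `ρ` is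
exactly what makes `x < L` in each case.
-/

open scoped ENNReal

noncomputable section

/-- The generalized factorial: `α_0! = 1`, `α_k! = α_1 ⋯ α_k`. -/
def alphaFact (α : ℕ → ℝ) : ℕ → ℝ
  | 0 => 1
  | n + 1 => alphaFact α n * α (n + 1)

open Filter Topology

lemma summable_pow_mul_of_tendsto_ofReal_div_succ {b : ℕ → ℝ} (hb : ∀ n, 0 < b n)
    {L : ℝ≥0∞} (hL : Tendsto (fun n => ENNReal.ofReal (b n / b (n + 1))) atTop (𝓝 L))
    {x : ℝ} (hx : 0 ≤ x) (hxL : ENNReal.ofReal x < L) :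
    Summable (fun n => x ^ n * b n) := by
  obtain ⟨s, hs0, hxs, hsL⟩ := ENNReal.lt_iff_exists_real_btwn.mp hxL
  have hxs : x < s := (ENNReal.ofReal_lt_ofReal_iff_of_nonneg hx).mp hxs
  have hs : 0 < s := hx.trans_lt hxs
  refine summable_of_ratio_norm_eventually_le ((div_lt_one hs).mpr hxs) ?_
  filter_upwards [hL.eventually (eventually_gt_nhds hsL)] with n hn
  have hbn : s * b (n + 1) < b n :=
    (lt_div_iff₀ (hb (n + 1))).mp ((ENNReal.ofReal_lt_ofReal_iff_of_nonneg hs0).mp hn)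
  have hxn : 0 ≤ x ^ n := pow_nonneg hx n
  rw [Real.norm_of_nonneg (by have := hb (n + 1); positivity),
    Real.norm_of_nonneg (by have := hb n; positivity), div_mul_eq_mul_div,
    le_div_iff₀ hs, pow_succ]
  calc x ^ n * x * b (n + 1) * s = x ^ n * x * (s * b (n + 1)) := by ring
    _ ≤ x ^ n * x * b n := by gcongr
    _ = x * (x ^ n * b n) := by ring

section alphaFact

variable {α : ℕ → ℝ}

lemma alpha_succ_pos (hα : StrictMono α) (hα0 : α 0 = 0) (n : ℕ) : 0 < α (n + 1) :=
  hα0 ▸ hα n.succ_pos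

lemma alphaFact_pos (hα : StrictMono α) (hα0 : α 0 = 0) : ∀ n, 0 < alphaFact α n
  | 0 => one_pos
  | n + 1 => mul_pos (alphaFact_pos hα hα0 n) (alpha_succ_pos hα hα0 n)

lemma tendsto_ofReal_alpha_succ (hα : Monotone α) :
    Tendsto (fun n => ENNReal.ofReal (α (n + 1))) atTop (𝓝 (⨆ n, ENNReal.ofReal (α n))) :=
  (tendsto_atTop_iSup fun _ _ h => ENNReal.ofReal_le_ofReal (hα h)).comp
    (tendsto_add_atTop_nat 1)

lemma iSup_ofReal_alpha_ne_zero (hα : StrictMono α) (hα0 : α 0 = 0) :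
    ⨆ n, ENNReal.ofReal (α n) ≠ 0 :=
  ((ENNReal.ofReal_pos.mpr (alpha_succ_pos hα hα0 0)).trans_le
    (le_iSup (fun n => ENNReal.ofReal (α n)) 1)).ne'

lemma summable_sq_div_alphaFact_sq (hα : StrictMono α) (hα0 : α 0 = 0) {c : ℝ} (hc : 0 ≤ c)
    (hcα : ENNReal.ofReal c < ⨆ n, ENNReal.ofReal (α n)) :
    Summable (fun n => c ^ (2 * n) / alphaFact α n ^ 2) := by
  have hF := alphaFact_pos hα hα0
  have hratio : ∀ n, 1 / alphaFact α n ^ 2 / (1 / alphaFact α (n + 1) ^ 2) = α (n + 1) ^ 2 :=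
    fun n => by
      have := hF n
      have := alpha_succ_pos hα hα0 n
      simp only [alphaFact]
      field_simp
  have hL : Tendsto (fun n => ENNReal.ofReal (1 / alphaFact α n ^ 2 / (1 / alphaFact α (n + 1) ^ 2)))
      atTop (𝓝 ((⨆ n, ENNReal.ofReal (α n)) ^ 2)) := by
    refine (ENNReal.Tendsto.pow (tendsto_ofReal_alpha_succ hα.monotone)).congr fun n => ?_
    rw [hratio, ENNReal.ofReal_pow (alpha_succ_pos hα hα0 n).le]
  have hx : ENNReal.ofReal (c ^ 2) < (⨆ n, ENNReal.ofReal (α n)) ^ 2 := by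
    rw [ENNReal.ofReal_pow hc]
    exact ENNReal.pow_lt_pow_left two_ne_zero hcα
  convert summable_pow_mul_of_tendsto_ofReal_div_succ (fun n => by have := hF n; positivity)
    hL (sq_nonneg c) hx using 2 with n
  rw [pow_mul, mul_one_div]

lemma summable_pow_mul_div_alphaFact (hα : StrictMono α) (hα0 : α 0 = 0)
    {M : ℕ → ℝ} (hM : ∀ n, 0 < M n) {Mlim : ℝ≥0∞} (hMlim : 0 < Mlim)
    (hlim : Tendsto (fun n => ENNReal.ofReal (M n / M (n + 1))) atTop (𝓝 Mlim))
    {x : ℝ} (hx : 0 ≤ x) (hxL : ENNReal.ofReal x < (⨆ n, ENNReal.ofReal (α n)) * Mlim) :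
    Summable (fun n => x ^ n * (M n / alphaFact α n)) := by
  have hratio : ∀ n, M n / alphaFact α n / (M (n + 1) / alphaFact α (n + 1)) =
      α (n + 1) * (M n / M (n + 1)) := fun n => by
    have := alphaFact_pos hα hα0 n
    have := hM (n + 1)
    simp only [alphaFact]
    field_simp
  have hL : Tendsto (fun n => ENNReal.ofReal (M n / alphaFact α n /
      (M (n + 1) / alphaFact α (n + 1)))) atTop (𝓝 ((⨆ n, ENNReal.ofReal (α n)) * Mlim)) := by
    refine (ENNReal.Tendsto.mul (tendsto_ofReal_alpha_succ hα.monotone)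
      (.inl (iSup_ofReal_alpha_ne_zero hα hα0)) hlim (.inl hMlim.ne')).congr fun n => ?_
    rw [hratio, ENNReal.ofReal_mul (alpha_succ_pos hα hα0 n).le]
  exact summable_pow_mul_of_tendsto_ofReal_div_succ
    (fun n => div_pos (hM n) (alphaFact_pos hα hα0 n)) hL hx hxL

lemma summable_smul_div_alphaFact {E : Type*} [NormedAddCommGroup E] [NormedSpace ℂ E]
    [CompleteSpace E] (hα : StrictMono α) (hα0 : α 0 = 0) {v : ℕ → E} {A r : ℝ} (hr : 0 < r)
    {M : ℕ → ℝ} (hM : ∀ n, 0 < M n) {Mlim : ℝ≥0∞} (hMlim : 0 < Mlim)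
    (hlim : Tendsto (fun n => ENNReal.ofReal (M n / M (n + 1))) atTop (𝓝 Mlim))
    (hv : ∀ n, ‖v n‖ ≤ A * r ^ n * M n) {z : ℂ}
    (hz : ENNReal.ofReal ‖z‖ < (⨆ n, ENNReal.ofReal (α n)) * (Mlim / ENNReal.ofReal r)) :
    Summable (fun n => (z ^ n / (alphaFact α n : ℂ)) • v n) := by
  have hr' : ENNReal.ofReal r ≠ 0 := (ENNReal.ofReal_pos.mpr hr).ne'
  have hzr : ENNReal.ofReal (‖z‖ * r) < (⨆ n, ENNReal.ofReal (α n)) * Mlim := by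
    rw [ENNReal.ofReal_mul (norm_nonneg z), ← ENNReal.div_mul_cancel hr' ENNReal.ofReal_ne_top
      (a := ENNReal.ofReal r) (b := Mlim), ← mul_assoc]
    exact ENNReal.mul_lt_mul_left hr' ENNReal.ofReal_ne_top hz
  refine ((summable_pow_mul_div_alphaFact hα hα0 hM hMlim hlim (by positivity) hzr).mul_left A
    |>.of_norm_bounded fun n => ?_)
  have hF := alphaFact_pos hα hα0 n
  rw [norm_smul, norm_div, norm_pow, Complex.norm_real, Real.norm_of_nonneg hF.le]
  calc ‖z‖ ^ n / alphaFact α n * ‖v n‖ ≤ ‖z‖ ^ n / alphaFact α n * (A * r ^ n * M n) := by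
        gcongr; exact hv n
    _ = A * ((‖z‖ * r) ^ n * (M n / alphaFact α n)) := by ring

end alphaFact

theorem stmt16_general {H : Type*} [NormedAddCommGroup H] [InnerProductSpace ℂ H]
    [CompleteSpace H]
    (φt Ψt : ℕ → H) (α : ℕ → ℝ)
    (hα : StrictMono α) (hα0 : α 0 = 0)
    (Aφ AΨ rφ rΨ : ℝ)
    (hrφ : 0 < rφ) (hrΨ : 0 < rΨ)
    (Mφ MΨ : ℕ → ℝ) (hMφ : ∀ n, 0 < Mφ n) (hMΨ : ∀ n, 0 < MΨ n)
    (Mlimφ MlimΨ : ℝ≥0∞) (hMlimφ : 0 < Mlimφ) (hMlimΨ : 0 < MlimΨ)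
    (hlimφ : Filter.Tendsto (fun n => ENNReal.ofReal (Mφ n / Mφ (n + 1)))
      Filter.atTop (nhds Mlimφ))
    (hlimΨ : Filter.Tendsto (fun n => ENNReal.ofReal (MΨ n / MΨ (n + 1)))
      Filter.atTop (nhds MlimΨ))
    (hboundφ : ∀ n, ‖φt n‖ ≤ Aφ * rφ ^ n * Mφ n)
    (hboundΨ : ∀ n, ‖Ψt n‖ ≤ AΨ * rΨ ^ n * MΨ n)
    -- `ᾱ = sup_n α_n` and the radius `ρ = ᾱ · min(1, M(φ)/r_φ, M(Ψ)/r_Ψ)`,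
    -- computed in `[0,∞]`:
    (αbar ρ : ℝ≥0∞)
    (hαbar : αbar = ⨆ n, ENNReal.ofReal (α n))
    (hρ : ρ = αbar *
      min 1 (min (Mlimφ / ENNReal.ofReal rφ) (MlimΨ / ENNReal.ofReal rΨ))) :
    ∀ z : ℂ, ENNReal.ofReal ‖z‖ < ρ →
      Summable (fun j : ℕ => ‖z‖ ^ (2 * j) / alphaFact α j ^ 2) ∧
      Summable (fun j : ℕ => (z ^ j / (alphaFact α j : ℂ)) • φt j) ∧
      Summable (fun j : ℕ => (z ^ j / (alphaFact α j : ℂ)) • Ψt j) := by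
  intro z hz
  subst hαbar hρ
  have hz1 := hz.trans_le (mul_le_mul_right (min_le_left _ _) _)
  have hzφ := hz.trans_le (mul_le_mul_right ((min_le_right _ _).trans (min_le_left _ _)) _)
  have hzΨ := hz.trans_le (mul_le_mul_right ((min_le_right _ _).trans (min_le_right _ _)) _)
  rw [mul_one] at hz1
  exact ⟨summable_sq_div_alphaFact_sq hα hα0 (norm_nonneg z) hz1,
    summable_smul_div_alphaFact hα hα0 hrφ hMφ hMlimφ hlimφ hboundφ hzφ,
    summable_smul_div_alphaFact hα hα0 hrΨ hMΨ hMlimΨ hlimΨ hboundΨ hzΨ⟩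

theorem stmt16 {H : Type*} [NormedAddCommGroup H] [InnerProductSpace ℂ H]
    [CompleteSpace H]
    (φt Ψt : ℕ → H) (α : ℕ → ℝ)
    (hα : StrictMono α) (hα0 : α 0 = 0)
    (Aφ AΨ rφ rΨ : ℝ)
    (hAφ : 0 < Aφ) (hAΨ : 0 < AΨ) (hrφ : 0 < rφ) (hrΨ : 0 < rΨ)
    (Mφ MΨ : ℕ → ℝ) (hMφ : ∀ n, 0 < Mφ n) (hMΨ : ∀ n, 0 < MΨ n)
    (Mlimφ MlimΨ : ℝ≥0∞) (hMlimφ : 0 < Mlimφ) (hMlimΨ : 0 < MlimΨ)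
    (hlimφ : Filter.Tendsto (fun n => ENNReal.ofReal (Mφ n / Mφ (n + 1)))
      Filter.atTop (nhds Mlimφ))
    (hlimΨ : Filter.Tendsto (fun n => ENNReal.ofReal (MΨ n / MΨ (n + 1)))
      Filter.atTop (nhds MlimΨ))
    (hboundφ : ∀ n, ‖φt n‖ ≤ Aφ * rφ ^ n * Mφ n)
    (hboundΨ : ∀ n, ‖Ψt n‖ ≤ AΨ * rΨ ^ n * MΨ n)
    -- `ᾱ = sup_n α_n` and the radius `ρ = ᾱ · min(1, M(φ)/r_φ, M(Ψ)/r_Ψ)`,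
    -- computed in `[0,∞]`:
    (αbar ρ : ℝ≥0∞)
    (hαbar : αbar = ⨆ n, ENNReal.ofReal (α n))
    (hρ : ρ = αbar *
      min 1 (min (Mlimφ / ENNReal.ofReal rφ) (MlimΨ / ENNReal.ofReal rΨ))) :
    ∀ z : ℂ, ENNReal.ofReal ‖z‖ < ρ →
      Summable (fun j : ℕ => ‖z‖ ^ (2 * j) / alphaFact α j ^ 2) ∧
      Summable (fun j : ℕ => (z ^ j / (alphaFact α j : ℂ)) • φt j) ∧
      Summable (fun j : ℕ => (z ^ j / (alphaFact α j : ℂ)) • Ψt j) :=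
  stmt16_general φt Ψt α hα hα0 Aφ AΨ rφ rΨ hrφ hrΨ Mφ MΨ hMφ hMΨ Mlimφ MlimΨ hMlimφ hMlimΨ hlimφ
    hlimΨ hboundφ hboundΨ αbar ρ hαbar hρ
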